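/- arXiv:1112.5485 — 2 statements merged into one kernel-verified Lean document; each statement's English description precedes it below -/
import Mathlib

section
/- Let w ∈ L_n. If α ∈ F_n(w) and β ∈ B_n^+, then αβ ∈ F_n(w); that is, F_n(w) is closed under right multiplication, so α ∈ F_n(w) implies α·B_n^+ ⊆ F_n(w). -/
/-!
Common setup: the positive braid monoid `B_n^+` on `n` strands, presented by the
Artin generators `σ_1, …, σ_{n-1}` (1-based indexing) with the braid relations;
lex-representatives, forbidden prefixes, admissible functions, etc.
-/

namespace BraidPaper

/-- Words in the Artin generators: the free monoid on `n - 1` letters. -/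
abbrev Word (n : ℕ) := FreeMonoid (Fin (n - 1))

/-- The generator `σ_i` (`1 ≤ i ≤ n - 1`, 1-based) as a one-letter word;
the empty word for out-of-range indices. -/
def sigma (n : ℕ) (i : ℕ) : Word n :=
  if h : 1 ≤ i ∧ i ≤ n - 1 then FreeMonoid.of (⟨i - 1, by omega⟩ : Fin (n - 1)) else 1

/-- The braid relations. -/
inductive BraidRel (n : ℕ) : Word n → Word n → Prop
  | comm : ∀ i j : ℕ, 1 ≤ i → i ≤ n - 1 → 1 ≤ j → j ≤ n - 1 → (i + 2 ≤ j ∨ j + 2 ≤ i) →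
      BraidRel n (sigma n i * sigma n j) (sigma n j * sigma n i)
  | braid : ∀ i : ℕ, 1 ≤ i → i + 1 ≤ n - 1 →
      BraidRel n (sigma n i * sigma n (i + 1) * sigma n i)
        (sigma n (i + 1) * sigma n i * sigma n (i + 1))

/-- The congruence generated by the braid relations. -/
def braidCon (n : ℕ) : Con (Word n) := conGen (BraidRel n)

/-- The positive braid monoid `B_n^+`. -/
abbrev PB (n : ℕ) := (braidCon n).Quotient

/-- The canonical projection `b : A_n^* → B_n^+`. -/
def pr (n : ℕ) : Word n →* PB n := (braidCon n).mk'

/-- The length homomorphism on words (with values in `Multiplicative ℕ`). -/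
def lenHom (n : ℕ) : Word n →* Multiplicative ℕ :=
  FreeMonoid.lift fun _ => Multiplicative.ofAdd 1

lemma lenHom_sigma (n t : ℕ) (h1 : 1 ≤ t) (h2 : t ≤ n - 1) :
    lenHom n (sigma n t) = Multiplicative.ofAdd 1 := by
  rw [sigma, dif_pos ⟨h1, h2⟩]
  exact FreeMonoid.lift_eval_of _ _

lemma braidCon_le_ker (n : ℕ) : braidCon n ≤ Con.ker (lenHom n) := by
  refine Con.conGen_le.mpr ?_
  intro x y h
  rw [Con.ker_rel]
  cases h with
  | comm i j hi hi' hj hj' hij =>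
      rw [map_mul, map_mul, mul_comm]
  | braid i hi hi' =>
      rw [map_mul, map_mul, map_mul, map_mul,
        lenHom_sigma n i hi (by omega), lenHom_sigma n (i + 1) (by omega) hi']

/-- The (well-defined) length of a positive braid. -/
def len (n : ℕ) (x : PB n) : ℕ :=
  Multiplicative.toAdd (Con.lift _ (lenHom n) (braidCon_le_ker n) x)

/-- The length of a word. -/
def wlen {n : ℕ} (w : Word n) : ℕ := (FreeMonoid.toList w).length

/-- Strict lexicographic order on words, induced by `σ_1 < σ_2 < ⋯ < σ_{n-1}`. -/
def lexLt {n : ℕ} (u v : Word n) : Prop :=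
  List.Lex (· < ·) (FreeMonoid.toList u) (FreeMonoid.toList v)

/-- `L_n`: the set of lex-representatives, i.e. words that are `≤_lex`-minimal among
all words representing the same element of `B_n^+` (all of which have equal length). -/
def Ln (n : ℕ) : Set (Word n) :=
  {w | ∀ v : Word n, pr n v = pr n w → ¬ lexLt v w}

open Classical in
/-- `ω(β)`: the lex-representative of a positive braid `β`. -/
noncomputable def omegaRep (n : ℕ) (β : PB n) : Word n :=
  if h : ∃ w : Word n, pr n w = β ∧ w ∈ Ln n then h.choose else 1

/-- `F_n(w)`: the set of forbidden prefixes after `w`. -/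
def Fset (n : ℕ) (w : Word n) : Set (PB n) :=
  {α | w * omegaRep n α ∉ Ln n}

/-- Left-divisibility `a ≼ b` in `B_n^+`. -/
def ldvd (n : ℕ) (a b : PB n) : Prop := ∃ c : PB n, a * c = b

/-- The set of `≼`-minimal elements of a subset of `B_n^+`. -/
def minimals (n : ℕ) (S : Set (PB n)) : Set (PB n) :=
  {a | a ∈ S ∧ ∀ b ∈ S, ldvd n b a → b = a}

/-- `F_n^min(w)`: the set of minimal forbidden prefixes after `w`. -/
def Fmin (n : ℕ) (w : Word n) : Set (PB n) := minimals n (Fset n w)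

/-- `d` is a least common right-multiple of the set `S`. -/
def IsLcm (n : ℕ) (S : Set (PB n)) (d : PB n) : Prop :=
  (∀ a ∈ S, ldvd n a d) ∧ ∀ e : PB n, (∀ a ∈ S, ldvd n a e) → ldvd n d e

/-- The descending product `σ_a σ_{a-1} ⋯ σ_b` (empty if `b > a`). -/
def prodDesc (n a b : ℕ) : Word n :=
  (((List.range' b (a + 1 - b)).reverse).map (sigma n)).prod

/-- The ascending product `σ_a σ_{a+1} ⋯ σ_b` (empty if `a > b`). -/
def prodAsc (n a b : ℕ) : Word n :=
  ((List.range' a (b + 1 - a)).map (sigma n)).prod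

/-- Admissible functions `f : {1,…,n-1} → {-1,0,1,…,n-1}`. -/
def Admissible (n : ℕ) (f : ℕ → ℤ) : Prop :=
  (∀ i : ℕ, 1 ≤ i → i ≤ n - 1 → -1 ≤ f i ∧ f i ≤ (i : ℤ)) ∧ f 1 ≠ -1

/-- The set `F_f ⊆ B_n^+` associated to an admissible function `f`: the elements
`σ_i σ_{i-1} ⋯ σ_{f(i)}` for `i` with `1 ≤ f(i) ≤ i`, together with the elements
`σ_{i-1} σ_i` for `i` with `f(i) = -1`. -/
def Ff (n : ℕ) (f : ℕ → ℤ) : Set (PB n) :=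
  {x | ∃ i : ℕ, 1 ≤ i ∧ i ≤ n - 1 ∧ 1 ≤ f i ∧ f i ≤ (i : ℤ) ∧
        x = pr n (prodDesc n i (f i).toNat)} ∪
  {x | ∃ i : ℕ, 1 ≤ i ∧ i ≤ n - 1 ∧ f i = -1 ∧ x = pr n (sigma n (i - 1) * sigma n i)}

/-- `F_n^min(w, m)`: the set of `≼`-minimal elements of `{σ_1,…,σ_m} ∪ F_n^min(w)`. -/
def FminM (n : ℕ) (w : Word n) (m : ℕ) : Set (PB n) :=
  minimals n ({x | ∃ i : ℕ, 1 ≤ i ∧ i ≤ m ∧ x = pr n (sigma n i)} ∪ Fmin n w)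

/-- `x_{n,j}` (for `j : ℤ`): the number of elements of `B_n^+` of length `j`
(`0` for negative `j`). -/
noncomputable def xcount (n : ℕ) (j : ℤ) : ℕ :=
  Nat.card {x : PB n // (len n x : ℤ) = j}

/-- `x_{n,k}(w,m)`: the number of words in `L_n` of length `k` of the form `w·w'`,
where `w'` does not begin with any of `σ_1, …, σ_m`. -/
noncomputable def xwm (n k : ℕ) (w : Word n) (m : ℕ) : ℕ :=
  Nat.card {v : Word n // wlen v = k ∧ v ∈ Ln n ∧
    ∃ w' : Word n, v = w * w' ∧
      ∀ i : ℕ, 1 ≤ i → i ≤ m → ¬ ∃ u : Word n, w' = sigma n i * u}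

/-!
Suppose `w·ω(αβ) ∈ L_n` while some word `v <lex w·ω(α)` represents the same braid as
`w·ω(α)`. If `v` and `w·ω(α)` first differ inside `w`, then `v·ω(β)` is a representative of
`w·αβ` smaller than `w·ω(αβ)`. Otherwise `v = w·v'`, and left cancellativity of `B_n^+`
makes `v'` a representative of `α` smaller than `ω(α)`.

Left cancellativity is Garside's theorem. It follows from the lcm property for letters: if
`a·u = b·v` then `u = complement a b · z` and `v = complement b a · z` for some `z`. This is
proved by induction on the length of `u` and on the derivation of `a·u = b·v` from the braid
relations; the transitivity step is the cube condition for three letters, checked case by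
case on their relative positions.
-/

section

variable {n : ℕ}

lemma lex_append_cases {α : Type*} [LT α] {u w a : List α} (h : List.Lex (· < ·) u (w ++ a))
    (hlen : u.length = w.length + a.length) :
    (∃ a', u = w ++ a' ∧ List.Lex (· < ·) a' a) ∨
      ∀ b c, List.Lex (· < ·) (u ++ b) (w ++ c) := by
  induction w generalizing u with
  | nil => exact Or.inl ⟨u, rfl, h⟩
  | cons x w ih =>
      cases u with
      | nil => simp only [List.length_nil, List.length_cons] at hlen; omega
      | cons y u =>
          cases h with
          | cons h =>
              have hlen' : u.length = w.length + a.length := by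
                simp only [List.length_cons] at hlen; omega
              rcases ih h hlen' with ⟨a', rfl, ha'⟩ | hext
              · exact Or.inl ⟨a', rfl, ha'⟩
              · exact Or.inr fun b c => .cons (hext b c)
          | rel hyx => exact Or.inr fun _ _ => .rel hyx

lemma lenHom_apply (u : Word n) : lenHom n u = Multiplicative.ofAdd u.length := by
  induction u using FreeMonoid.recOn with
  | one => rfl
  | of_mul x u ih =>
      rw [map_mul, ih, lenHom, FreeMonoid.lift_eval_of, FreeMonoid.length_mul,
        FreeMonoid.length_of, ofAdd_add]

lemma length_eq_of_braidCon {u v : Word n} (h : braidCon n u v) : u.length = v.length := by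
  have := Con.le_def.mp (braidCon_le_ker n) h
  rwa [Con.ker_rel, lenHom_apply, lenHom_apply, Multiplicative.ofAdd.injective.eq_iff] at this

def Far (a b : Fin (n - 1)) : Prop := a.val + 2 ≤ b.val ∨ b.val + 2 ≤ a.val

def Adj (a b : Fin (n - 1)) : Prop := a.val + 1 = b.val ∨ b.val + 1 = a.val

lemma Far.symm {a b : Fin (n - 1)} (h : Far a b) : Far b a := Or.symm h

lemma Adj.symm {a b : Fin (n - 1)} (h : Adj a b) : Adj b a := Or.symm h

lemma far_or_adj_of_ne {a b : Fin (n - 1)} (h : a ≠ b) : Far a b ∨ Adj a b := by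
  rw [Ne, Fin.ext_iff] at h
  rw [Far, Adj]
  omega

instance (a b : Fin (n - 1)) : Decidable (Adj a b) := inferInstanceAs (Decidable (_ ∨ _))

/-- `a · complement a b = b · complement b a` is the least common right multiple of `a`, `b`. -/
def complement (a b : Fin (n - 1)) : List (Fin (n - 1)) :=
  if a = b then [] else if Adj a b then [b, a] else [b]

@[simp]
lemma complement_self (a : Fin (n - 1)) : complement a a = [] := if_pos rfl

lemma complement_of_far {a b : Fin (n - 1)} (h : Far a b) : complement a b = [b] := by
  have hne : a ≠ b := by rintro rfl; rcases h with h | h <;> omega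
  have hadj : ¬ Adj a b := by unfold Far Adj at *; omega
  rw [complement, if_neg hne, if_neg hadj]

lemma complement_of_adj {a b : Fin (n - 1)} (h : Adj a b) : complement a b = [b, a] := by
  have hne : a ≠ b := by rintro rfl; rcases h with h | h <;> omega
  rw [complement, if_neg hne, if_pos h]

def BraidEqv (n : ℕ) (u v : List (Fin (n - 1))) : Prop :=
  braidCon n (FreeMonoid.ofList u) (FreeMonoid.ofList v)

local infix:50 " ≈ᵇ " => BraidEqv _

namespace BraidEqv

variable {u v w u' v' : List (Fin (n - 1))}

@[refl]
lemma refl (u : List (Fin (n - 1))) : u ≈ᵇ u := (braidCon n).refl _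

lemma symm (h : u ≈ᵇ v) : v ≈ᵇ u := (braidCon n).symm h

lemma trans (h : u ≈ᵇ v) (h' : v ≈ᵇ w) : u ≈ᵇ w := (braidCon n).trans h h'

instance : Trans (BraidEqv n) (BraidEqv n) (BraidEqv n) := ⟨trans⟩

lemma append (h : u ≈ᵇ v) (h' : u' ≈ᵇ v') : u ++ u' ≈ᵇ v ++ v' := (braidCon n).mul h h'

lemma append_left (p : List (Fin (n - 1))) (h : u ≈ᵇ v) : p ++ u ≈ᵇ p ++ v :=
  (refl p).append h

lemma cons (a : Fin (n - 1)) (h : u ≈ᵇ v) : a :: u ≈ᵇ a :: v := append_left [a] h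

lemma length_eq (h : u ≈ᵇ v) : u.length = v.length := length_eq_of_braidCon h

end BraidEqv

lemma sigma_val_succ (a : Fin (n - 1)) : sigma n (a.val + 1) = FreeMonoid.of a := by
  rw [sigma, dif_pos ⟨by omega, by omega⟩]
  congr

lemma sigma_eq_of {i : ℕ} (h₁ : 1 ≤ i) (h₂ : i ≤ n - 1) :
    sigma n i = FreeMonoid.of (⟨i - 1, by omega⟩ : Fin (n - 1)) := by
  rw [sigma, dif_pos ⟨h₁, h₂⟩]

lemma cons_complement (a b : Fin (n - 1)) : a :: complement a b ≈ᵇ b :: complement b a := by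
  obtain rfl | hne := eq_or_ne a b
  · rfl
  rcases far_or_adj_of_ne hne with h | h
  · rw [complement_of_far h, complement_of_far h.symm]
    have := BraidRel.comm (n := n) (a.val + 1) (b.val + 1) (by omega) (by omega) (by omega)
      (by omega) (by unfold Far at h; omega)
    rw [sigma_val_succ, sigma_val_succ] at this
    exact ConGen.Rel.of _ _ this
  · rw [complement_of_adj h, complement_of_adj h.symm]
    rcases h with h | h
    · have := BraidRel.braid (n := n) (a.val + 1) (by omega) (by omega)
      rw [show a.val + 1 + 1 = b.val + 1 by omega, sigma_val_succ, sigma_val_succ] at this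
      exact ConGen.Rel.of _ _ this
    · have := BraidRel.braid (n := n) (b.val + 1) (by omega) (by omega)
      rw [show b.val + 1 + 1 = a.val + 1 by omega, sigma_val_succ, sigma_val_succ] at this
      exact (ConGen.Rel.of _ _ this).symm

lemma BraidEqv.swap {a b : Fin (n - 1)} (p t : List (Fin (n - 1))) (h : Far a b) :
    p ++ a :: b :: t ≈ᵇ p ++ b :: a :: t := by
  have := cons_complement a b
  rw [complement_of_far h, complement_of_far h.symm] at this
  simpa using (this.append (refl t)).append_left p

lemma BraidEqv.braid {a b : Fin (n - 1)} (p t : List (Fin (n - 1))) (h : Adj a b) :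
    p ++ a :: b :: a :: t ≈ᵇ p ++ b :: a :: b :: t := by
  have := cons_complement a b
  rw [complement_of_adj h, complement_of_adj h.symm] at this
  simpa using (this.append (refl t)).append_left p

lemma BraidRel.exists_complement {x y : Word n} (h : BraidRel n x y) :
    ∃ a b : Fin (n - 1), x.toList = a :: complement a b ∧ y.toList = b :: complement b a := by
  cases h with
  | comm i j hi hi' hj hj' hij =>
      have hfar : Far (⟨i - 1, by omega⟩ : Fin (n - 1)) ⟨j - 1, by omega⟩ := by
        unfold Far; dsimp only; omega
      rw [sigma_eq_of hi hi', sigma_eq_of hj hj']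
      exact ⟨⟨i - 1, by omega⟩, ⟨j - 1, by omega⟩, by simp [complement_of_far hfar],
        by simp [complement_of_far hfar.symm]⟩
  | braid i hi hi' =>
      have hadj : Adj (⟨i - 1, by omega⟩ : Fin (n - 1)) ⟨i, by omega⟩ := by
        unfold Adj; dsimp only; omega
      rw [sigma_eq_of hi (by omega), sigma_eq_of (by omega : 1 ≤ i + 1) hi']
      exact ⟨⟨i - 1, by omega⟩, ⟨i, by omega⟩, by simp [complement_of_adj hadj],
        by simp [complement_of_adj hadj.symm]⟩

def FactorsThroughLcm (n : ℕ) (a b : Fin (n - 1)) (u v : List (Fin (n - 1))) : Prop :=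
  ∃ z, u ≈ᵇ complement a b ++ z ∧ v ≈ᵇ complement b a ++ z

def LcmPropertyBelow (n m : ℕ) : Prop :=
  ∀ (a b : Fin (n - 1)) (u v : List (Fin (n - 1))),
    u.length < m → a :: u ≈ᵇ b :: v → FactorsThroughLcm n a b u v

namespace LcmPropertyBelow

variable {m : ℕ} {a b : Fin (n - 1)} {u v : List (Fin (n - 1))}

lemma cancel (ih : LcmPropertyBelow n m) (hu : u.length < m) (h : a :: u ≈ᵇ a :: v) :
    u ≈ᵇ v := by
  obtain ⟨z, hu, hv⟩ := ih a a u v hu h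
  simp only [complement_self, List.nil_append] at hu hv
  exact hu.trans hv.symm

lemma far (ih : LcmPropertyBelow n m) (hab : Far a b) (hu : u.length < m)
    (h : a :: u ≈ᵇ b :: v) : ∃ z, u ≈ᵇ b :: z ∧ v ≈ᵇ a :: z := by
  simpa [FactorsThroughLcm, complement_of_far hab, complement_of_far hab.symm] using
    ih a b u v hu h

lemma adj (ih : LcmPropertyBelow n m) (hab : Adj a b) (hu : u.length < m)
    (h : a :: u ≈ᵇ b :: v) : ∃ z, u ≈ᵇ b :: a :: z ∧ v ≈ᵇ a :: b :: z := by
  simpa [FactorsThroughLcm, complement_of_adj hab, complement_of_adj hab.symm] using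
    ih a b u v hu h

lemma cancel_append (ih : LcmPropertyBelow n m) {p : List (Fin (n - 1))}
    (hu : (p ++ u).length ≤ m) (h : p ++ u ≈ᵇ p ++ v) : u ≈ᵇ v := by
  induction p with
  | nil => exact h
  | cons x p ihp =>
      simp only [List.cons_append, List.length_cons] at h hu
      exact ihp (by omega) (ih.cancel (by omega) h)

end LcmPropertyBelow

def CubeCondition (n m : ℕ) (a b c : Fin (n - 1)) : Prop :=
  ∀ t s : List (Fin (n - 1)), (complement c a ++ t).length ≤ m →
    complement c a ++ t ≈ᵇ complement c b ++ s →
    ∃ z, complement a c ++ t ≈ᵇ complement a b ++ z ∧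
      complement b c ++ s ≈ᵇ complement b a ++ z

section Cube

variable {m : ℕ} {a b c : Fin (n - 1)}

lemma CubeCondition.swap (h : CubeCondition n m b a c) : CubeCondition n m a b c := by
  intro t s hlen hts
  obtain ⟨z, hs, ht⟩ := h s t (hts.length_eq ▸ hlen) hts.symm
  exact ⟨z, ht, hs⟩

lemma cube_of_far_far_far (ih : LcmPropertyBelow n m) (hac : Far a c) (hbc : Far b c)
    (hab : Far a b) : CubeCondition n m a b c := by
  intro t s hlen h
  simp only [complement_of_far, hac, hac.symm, hbc, hbc.symm, hab, hab.symm, List.cons_append,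
    List.nil_append, List.length_cons] at hlen h ⊢
  obtain ⟨z, ht, hs⟩ := ih.far hab (by omega) h
  refine ⟨c :: z, ?_, ?_⟩
  · calc c :: t ≈ᵇ c :: b :: z := ht.cons c
      _ ≈ᵇ b :: c :: z := BraidEqv.swap [] z hbc.symm
  · calc c :: s ≈ᵇ c :: a :: z := hs.cons c
      _ ≈ᵇ a :: c :: z := BraidEqv.swap [] z hac.symm

lemma cube_of_far_far_adj (ih : LcmPropertyBelow n m) (hac : Far a c) (hbc : Far b c)
    (hab : Adj a b) : CubeCondition n m a b c := by
  intro t s hlen h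
  simp only [complement_of_far, complement_of_adj, hac, hac.symm, hbc, hbc.symm, hab, hab.symm,
    List.cons_append, List.nil_append, List.length_cons] at hlen h ⊢
  obtain ⟨z, ht, hs⟩ := ih.adj hab (by omega) h
  refine ⟨c :: z, ?_, ?_⟩
  · calc c :: t ≈ᵇ c :: b :: a :: z := ht.cons c
      _ ≈ᵇ b :: c :: a :: z := BraidEqv.swap [] _ hbc.symm
      _ ≈ᵇ b :: a :: c :: z := BraidEqv.swap [b] z hac.symm
  · calc c :: s ≈ᵇ c :: a :: b :: z := hs.cons c
      _ ≈ᵇ a :: c :: b :: z := BraidEqv.swap [] _ hac.symm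
      _ ≈ᵇ a :: b :: c :: z := BraidEqv.swap [a] z hbc.symm

lemma cube_of_adj_far_far (ih : LcmPropertyBelow n m) (hac : Adj a c) (hbc : Far b c)
    (hab : Far a b) : CubeCondition n m a b c := by
  intro t s hlen h
  simp only [complement_of_far, complement_of_adj, hac, hac.symm, hbc, hbc.symm, hab, hab.symm,
    List.cons_append, List.nil_append, List.length_cons] at hlen h ⊢
  obtain ⟨z₁, hct, hs⟩ := ih.far hab (by simp only [List.length_cons]; omega) h
  obtain ⟨z₂, ht, hz₁⟩ := ih.far hbc.symm (by omega) hct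
  refine ⟨c :: a :: z₂, ?_, ?_⟩
  · calc c :: a :: t ≈ᵇ c :: a :: b :: z₂ := ht.append_left [c, a]
      _ ≈ᵇ c :: b :: a :: z₂ := BraidEqv.swap [c] z₂ hab
      _ ≈ᵇ b :: c :: a :: z₂ := BraidEqv.swap [] _ hbc.symm
  · calc c :: s ≈ᵇ c :: a :: z₁ := hs.cons c
      _ ≈ᵇ c :: a :: c :: z₂ := hz₁.append_left [c, a]
      _ ≈ᵇ a :: c :: a :: z₂ := BraidEqv.braid [] z₂ hac.symm

lemma cube_of_adj_adj_far (ih : LcmPropertyBelow n m) (hac : Adj a c) (hbc : Adj b c)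
    (hab : Far a b) : CubeCondition n m a b c := by
  intro t s hlen h
  simp only [complement_of_far, complement_of_adj, hac, hac.symm, hbc, hbc.symm, hab, hab.symm,
    List.cons_append, List.nil_append, List.length_cons] at hlen h ⊢
  have hts := h.length_eq
  simp only [List.length_cons] at hts
  obtain ⟨z₁, hct, hcs⟩ := ih.far hab (by simp only [List.length_cons]; omega) h
  obtain ⟨z₂, ht, hz₁⟩ := ih.adj hbc.symm (by omega) hct
  obtain ⟨z₃, hs, hz₁'⟩ := ih.adj hac.symm (by omega) hcs
  have hz₂ := ht.length_eq
  simp only [List.length_cons] at hz₂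
  have hz₂z₃ := ih.cancel (by simp only [List.length_cons]; omega) (hz₁.symm.trans hz₁')
  obtain ⟨z₄, hz₂, hz₃⟩ := ih.far hab.symm (by omega) hz₂z₃
  refine ⟨c :: b :: a :: c :: z₄, ?_, ?_⟩
  · calc c :: a :: t ≈ᵇ c :: a :: b :: c :: z₂ := ht.append_left [c, a]
      _ ≈ᵇ c :: a :: b :: c :: a :: z₄ := hz₂.append_left [c, a, b, c]
      _ ≈ᵇ c :: b :: a :: c :: a :: z₄ := BraidEqv.swap [c] _ hab
      _ ≈ᵇ c :: b :: c :: a :: c :: z₄ := BraidEqv.braid [c, b] z₄ hac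
      _ ≈ᵇ b :: c :: b :: a :: c :: z₄ := BraidEqv.braid [] _ hbc.symm
  · calc c :: b :: s ≈ᵇ c :: b :: a :: c :: z₃ := hs.append_left [c, b]
      _ ≈ᵇ c :: b :: a :: c :: b :: z₄ := hz₃.append_left [c, b, a, c]
      _ ≈ᵇ c :: a :: b :: c :: b :: z₄ := BraidEqv.swap [c] _ hab.symm
      _ ≈ᵇ c :: a :: c :: b :: c :: z₄ := BraidEqv.braid [c, a] z₄ hbc
      _ ≈ᵇ a :: c :: a :: b :: c :: z₄ := BraidEqv.braid [] _ hac.symm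
      _ ≈ᵇ a :: c :: b :: a :: c :: z₄ := BraidEqv.swap [a, c] _ hab

lemma cube_of_adj_far_adj (ih : LcmPropertyBelow n m) (hac : Adj a c) (hbc : Far b c)
    (hab : Adj a b) : CubeCondition n m a b c := by
  intro t s hlen h
  simp only [complement_of_far, complement_of_adj, hac, hac.symm, hbc, hbc.symm, hab, hab.symm,
    List.cons_append, List.nil_append, List.length_cons] at hlen h ⊢
  obtain ⟨z₁, hct, hs⟩ := ih.adj hab (by simp only [List.length_cons]; omega) h
  obtain ⟨z₂, ht, hz₁⟩ := ih.far hbc.symm (by omega) hct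
  have hz := ht.length_eq
  have hz' := hz₁.length_eq
  simp only [List.length_cons] at hz hz'
  obtain ⟨z₃, hz₁, hz₂⟩ := ih.adj hac (by omega) hz₁
  refine ⟨c :: a :: b :: z₃, ?_, ?_⟩
  · calc c :: a :: t ≈ᵇ c :: a :: b :: z₂ := ht.append_left [c, a]
      _ ≈ᵇ c :: a :: b :: a :: c :: z₃ := hz₂.append_left [c, a, b]
      _ ≈ᵇ c :: b :: a :: b :: c :: z₃ := BraidEqv.braid [c] _ hab
      _ ≈ᵇ b :: c :: a :: b :: c :: z₃ := BraidEqv.swap [] _ hbc.symm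
      _ ≈ᵇ b :: c :: a :: c :: b :: z₃ := BraidEqv.swap [b, c, a] z₃ hbc
      _ ≈ᵇ b :: a :: c :: a :: b :: z₃ := BraidEqv.braid [b] _ hac.symm
  · calc c :: s ≈ᵇ c :: a :: b :: z₁ := hs.cons c
      _ ≈ᵇ c :: a :: b :: c :: a :: z₃ := hz₁.append_left [c, a, b]
      _ ≈ᵇ c :: a :: c :: b :: a :: z₃ := BraidEqv.swap [c, a] _ hbc
      _ ≈ᵇ a :: c :: a :: b :: a :: z₃ := BraidEqv.braid [] _ hac.symm
      _ ≈ᵇ a :: c :: b :: a :: b :: z₃ := BraidEqv.braid [a, c] z₃ hab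
      _ ≈ᵇ a :: b :: c :: a :: b :: z₃ := BraidEqv.swap [a] _ hbc.symm

end Cube

lemma LcmPropertyBelow.cubeCondition {m : ℕ} (ih : LcmPropertyBelow n m) (a b c : Fin (n - 1)) :
    CubeCondition n m a b c := by
  obtain rfl | hac := eq_or_ne a c
  · intro t s _ h
    exact ⟨s, by simpa using h, .refl _⟩
  obtain rfl | hbc := eq_or_ne b c
  · intro t s _ h
    exact ⟨t, .refl _, by simpa using h.symm⟩
  obtain rfl | hab := eq_or_ne a b
  · intro t s hlen h
    have hts := ih.cancel_append hlen h
    exact ⟨complement a c ++ t, by simpa using .refl _, by simpa using (hts.append_left _).symm⟩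
  rcases far_or_adj_of_ne hac with hac | hac <;> rcases far_or_adj_of_ne hbc with hbc | hbc <;>
    rcases far_or_adj_of_ne hab with hab | hab
  · exact cube_of_far_far_far ih hac hbc hab
  · exact cube_of_far_far_adj ih hac hbc hab
  · exact (cube_of_adj_far_far ih hbc hac hab.symm).swap
  · exact (cube_of_adj_far_adj ih hbc hac hab.symm).swap
  · exact cube_of_adj_far_far ih hac hbc hab
  · exact cube_of_adj_far_adj ih hac hbc hab
  · exact cube_of_adj_adj_far ih hac hbc hab
  · exfalso
    unfold Adj at hac hbc hab
    rw [Ne, Fin.ext_iff] at *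
    omega

namespace FactorsThroughLcm

variable {a b c : Fin (n - 1)} {u v w u' v' : List (Fin (n - 1))}

lemma symm (h : FactorsThroughLcm n a b u v) : FactorsThroughLcm n b a v u :=
  let ⟨z, hu, hv⟩ := h
  ⟨z, hv, hu⟩

lemma append (h : FactorsThroughLcm n a b u v) (h' : u' ≈ᵇ v') :
    FactorsThroughLcm n a b (u ++ u') (v ++ v') := by
  obtain ⟨z, hu, hv⟩ := h
  refine ⟨z ++ u', ?_, ?_⟩
  · simpa using hu.append (.refl u')
  · simpa using hv.append h'.symm

lemma trans {m : ℕ} (ih : LcmPropertyBelow n m) (hw : w.length ≤ m)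
    (h₁ : FactorsThroughLcm n a c u w) (h₂ : FactorsThroughLcm n c b w v) :
    FactorsThroughLcm n a b u v := by
  obtain ⟨t, hu, hwt⟩ := h₁
  obtain ⟨s, hws, hv⟩ := h₂
  obtain ⟨z, ht, hs⟩ :=
    ih.cubeCondition a b c t s (hwt.length_eq ▸ hw) (hwt.symm.trans hws)
  exact ⟨z, hu.trans ht, hv.trans hs⟩

end FactorsThroughLcm

lemma tail_length_eq_of_braidCon {x y : Word n} (h : braidCon n x y) {a b : Fin (n - 1)}
    {u v : List (Fin (n - 1))} (hx : x.toList = a :: u) (hy : y.toList = b :: v) :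
    u.length = v.length := by
  simpa [FreeMonoid.length, hx, hy] using length_eq_of_braidCon h

lemma factorsThroughLcm_of_braidCon {m : ℕ} (ih : LcmPropertyBelow n m) {x y : Word n}
    (h : braidCon n x y) {a b : Fin (n - 1)} {u v : List (Fin (n - 1))}
    (hx : x.toList = a :: u) (hy : y.toList = b :: v) (hu : u.length ≤ m) :
    FactorsThroughLcm n a b u v := by
  induction h generalizing a b u v with
  | of x y hr =>
      obtain ⟨a', b', hx', hy'⟩ := hr.exists_complement
      obtain ⟨rfl, rfl⟩ := List.cons.inj (hx'.symm.trans hx)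
      obtain ⟨rfl, rfl⟩ := List.cons.inj (hy'.symm.trans hy)
      exact ⟨[], by simpa using .refl _, by simpa using .refl _⟩
  | refl x =>
      obtain ⟨rfl, rfl⟩ := List.cons.inj (hx.symm.trans hy)
      exact ⟨u, by simpa using .refl _, by simpa using .refl _⟩
  | symm h ih' => exact (ih' hy hx (tail_length_eq_of_braidCon h hy hx ▸ hu)).symm
  | @trans x y _ h₁ h₂ ih₁ ih₂ =>
      have hxy : x.toList.length = y.toList.length := length_eq_of_braidCon h₁
      obtain ⟨c, w, hw⟩ := List.exists_cons_of_length_pos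
        (by rw [← hxy, hx]; exact Nat.succ_pos _)
      have hwu := tail_length_eq_of_braidCon h₁ hx hw
      exact (ih₁ hx hw hu).trans ih (hwu ▸ hu) (ih₂ hw hy (hwu ▸ hu))
  | @mul x₁ y₁ x₂ y₂ h₁ h₂ ih₁ ih₂ =>
      rw [FreeMonoid.toList_mul] at hx hy
      have hlen : x₁.toList.length = y₁.toList.length := length_eq_of_braidCon h₁
      rcases hx₁ : x₁.toList with _ | ⟨a', u₁⟩ <;>
        rcases hy₁ : y₁.toList with _ | ⟨b', v₁⟩ <;>
        simp only [hx₁, hy₁, List.nil_append, List.cons_append, List.cons.injEq,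
          List.length_nil, List.length_cons, Nat.add_one_ne_zero, Nat.zero_ne_add_one] at hx hy hlen
      · exact ih₂ hx hy hu
      · obtain ⟨rfl, rfl⟩ := hx
        obtain ⟨rfl, rfl⟩ := hy
        exact (ih₁ hx₁ hy₁ (le_trans (by simp) hu)).append h₂

theorem lcmPropertyBelow (m : ℕ) : LcmPropertyBelow n m := by
  induction m with
  | zero => exact fun _ _ u _ hu => absurd hu (Nat.not_lt_zero _)
  | succ m ih => exact fun _ _ _ _ hu h => factorsThroughLcm_of_braidCon ih h rfl rfl (by omega)

theorem pr_cancel_left {w x y : Word n} (h : pr n (w * x) = pr n (w * y)) : pr n x = pr n y :=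
  (Con.eq _).mpr <| (lcmPropertyBelow _).cancel_append (p := w.toList) (Nat.lt_succ_self _).le
    ((Con.eq _).mp h)

lemma exists_mem_Ln (β : PB n) : ∃ w : Word n, pr n w = β ∧ w ∈ Ln n := by
  obtain ⟨u, rfl⟩ := Con.mk'_surjective (c := braidCon n) β
  let S := {l : List (Fin (n - 1)) | pr n (FreeMonoid.ofList l) = pr n u}
  have hS : S.Finite := (List.finite_length_eq _ u.toList.length).subset fun l hl =>
    length_eq_of_braidCon ((Con.eq _).mp hl)
  obtain ⟨l, hl, hmin⟩ := Set.exists_min_image S id hS ⟨u.toList, rfl⟩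
  exact ⟨FreeMonoid.ofList l, hl, fun v hv hlt => (hmin v.toList (hv.trans hl)).not_gt hlt⟩

lemma omegaRep_spec (β : PB n) : pr n (omegaRep n β) = β ∧ omegaRep n β ∈ Ln n := by
  rw [omegaRep, dif_pos (exists_mem_Ln β)]
  exact (exists_mem_Ln β).choose_spec

end

theorem statement_0_general (n : ℕ) (w : Word n)
    (α β : PB n) (hα : α ∈ Fset n w) : α * β ∈ Fset n w := by
  intro hαβ
  obtain ⟨hprα, hα_min⟩ := omegaRep_spec α
  apply hα
  intro v hv hlt
  have hlen := length_eq_of_braidCon ((Con.eq _).mp hv)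
  rw [FreeMonoid.length_mul] at hlen
  rcases lex_append_cases hlt hlen with ⟨v', rfl, hlt'⟩ | hlt'
  · exact hα_min (FreeMonoid.ofList v') (pr_cancel_left (w := w) hv) hlt'
  · refine hαβ (v * omegaRep n β) ?_ (hlt' _ _)
    rw [map_mul, map_mul, hv, map_mul, mul_assoc, hprα, (omegaRep_spec β).1,
      (omegaRep_spec (α * β)).1]

/-- If `α ∈ F_n(w)` and `β ∈ B_n^+`, then `αβ ∈ F_n(w)`;
that is, `F_n(w)` is closed under right multiplication. -/
theorem statement_0 (n : ℕ) (hn : 2 ≤ n) (w : Word n) (hw : w ∈ Ln n)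
    (α β : PB n) (hα : α ∈ Fset n w) : α * β ∈ Fset n w :=
  statement_0_general n w α β hα

end BraidPaper
end

section
/- Let n ≥ 2. Every deterministic finite automaton over the alphabet Σ = {σ_1,…,σ_{n−1}} whose accepted language is exactly L_n has at least 2^{n−2} states. -/
/-!
Common setup: the positive braid monoid `B_n^+` on `n` strands, presented by the
Artin generators `σ_1, …, σ_{n-1}` (1-based indexing) with the braid relations;
lex-representatives, forbidden prefixes, admissible functions, etc.
-/

namespace BraidPaper

/-!
By Myhill–Nerode it suffices to exhibit `2^(n-2)` words with pairwise distinct left quotients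
of `L_n`. For `S ⊆ {2, …, n-1}` let `w_S = B_{n-1} ⋯ B_2`, where `B_k = σ_k σ_{k-1}` if `k ∈ S`
and `B_k = σ_k` otherwise; one letter `σ_j` separates `w_S` from `w_{S'}` whenever `j ∈ S ∆ S'`.

For `j ≥ 3`, write `w_S = P σ_j x σ_{j-1} r`, where `x` is `σ_{j-1}` if `j ∈ S` and empty
otherwise, and all letters of `r` are at most `σ_{j-2}`. If `j ∉ S`, then
`w_S σ_j = P σ_j σ_{j-1} σ_j r = P σ_{j-1} σ_j σ_{j-1} r` is not lex-minimal. If `j ∈ S`, the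
factor `σ_{j-1} σ_{j-1}` blocks every braid move except commuting the final `σ_j` leftwards
through `r`, and all the words so obtained are lex-larger. For `j = 2` the roles are swapped:
`σ_2 σ_1 σ_2 = σ_1 σ_2 σ_1`, whereas `⋯ σ_2 σ_2` admits no braid move at all.
-/

open Relation

section BraidMoves

variable {α : Type*} {m : ℕ}

/-- The braid relations on lists of letters `c : Fin m`, where `c` stands for `σ_{c+1}`. -/
inductive BraidMove : List (Fin m) → List (Fin m) → Prop
  | comm (c d : Fin m) : (c : ℕ) + 2 ≤ d ∨ (d : ℕ) + 2 ≤ c → BraidMove [c, d] [d, c]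
  | braid (c d : Fin m) : (c : ℕ) + 1 = d ∨ (d : ℕ) + 1 = c → BraidMove [c, d, c] [d, c, d]

def BraidStep (l l' : List (Fin m)) : Prop :=
  ∃ a b x y, BraidMove x y ∧ l = a ++ x ++ b ∧ l' = a ++ y ++ b

theorem BraidMove.symm {x y : List (Fin m)} (h : BraidMove x y) : BraidMove y x := by
  cases h with
  | comm c d h => exact .comm d c h.symm
  | braid c d h => exact .braid d c h.symm

instance : Std.Symm (BraidStep (m := m)) where
  symm _ _ := fun ⟨a, b, x, y, h, hl, hl'⟩ => ⟨a, b, y, x, h.symm, hl', hl⟩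

theorem BraidStep.append_left {l l' : List (Fin m)} (h : BraidStep l l') (p : List (Fin m)) :
    BraidStep (p ++ l) (p ++ l') := by
  obtain ⟨a, b, x, y, hxy, rfl, rfl⟩ := h
  exact ⟨p ++ a, b, x, y, hxy, by simp, by simp⟩

theorem BraidStep.append_right {l l' : List (Fin m)} (h : BraidStep l l') (s : List (Fin m)) :
    BraidStep (l ++ s) (l' ++ s) := by
  obtain ⟨a, b, x, y, hxy, rfl, rfl⟩ := h
  exact ⟨a, b ++ s, x, y, hxy, by simp, by simp⟩

theorem reflTransGen_braidStep_append {l₁ l₁' l₂ l₂' : List (Fin m)}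
    (h₁ : ReflTransGen BraidStep l₁ l₁') (h₂ : ReflTransGen BraidStep l₂ l₂') :
    ReflTransGen BraidStep (l₁ ++ l₂) (l₁' ++ l₂') :=
  (ReflTransGen.lift (· ++ l₂) (fun _ _ h => h.append_right l₂) _ _ h₁).trans
    (ReflTransGen.lift (l₁' ++ ·) (fun _ _ h => h.append_left l₁') _ _ h₂)

theorem mem_of_reflTransGen {r : α → α → Prop} {C : Set α} (hC : ∀ a ∈ C, ∀ b, r a b → b ∈ C)
    {a b : α} (h : ReflTransGen r a b) (hl : a ∈ C) : b ∈ C := by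
  induction h with
  | refl => exact hl
  | tail _ hstep ih => exact hC _ ih _ hstep

def SlowlyDecreasing (l : List (Fin m)) : Prop :=
  l.IsChain fun a b : Fin m => (b : ℕ) ≤ a ∧ (a : ℕ) ≤ b + 1

theorem BraidMove.not_slowlyDecreasing {x y : List (Fin m)} (h : BraidMove x y) :
    ¬ SlowlyDecreasing x := by
  cases h with
  | comm c d h => simp [SlowlyDecreasing]; omega
  | braid c d h => simp [SlowlyDecreasing, List.isChain_cons_cons]; omega

theorem SlowlyDecreasing.not_braidStep {l l' : List (Fin m)} (hl : SlowlyDecreasing l) :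
    ¬ BraidStep l l' := by
  rintro ⟨a, b, x, y, hxy, rfl, -⟩
  exact hxy.not_slowlyDecreasing (hl.infix (⟨a, b, rfl⟩ : x <:+: a ++ x ++ b))

end BraidMoves

section Insertions

variable {α : Type*} {m : ℕ}

theorem lex_append_left_iff {r : α → α → Prop} [Std.Irrefl r] (p : List α) {l₁ l₂ : List α} :
    List.Lex r (p ++ l₁) (p ++ l₂) ↔ List.Lex r l₁ l₂ := by
  induction p with
  | nil => rfl
  | cons a p ih => rw [List.cons_append, List.cons_append, List.lex_cons_iff, ih]

theorem braidStep_append_cons {A v l' : List (Fin m)} {c : Fin m} (hA : SlowlyDecreasing A)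
    (hv : SlowlyDecreasing v) (h : BraidStep (A ++ c :: v) l') :
    ∃ A₀ x₁ x₂ v₀ y, A = A₀ ++ x₁ ∧ v = x₂ ++ v₀ ∧ BraidMove (x₁ ++ c :: x₂) y ∧
      l' = A₀ ++ y ++ v₀ := by
  obtain ⟨a, b, x, y, hxy, heq, rfl⟩ := h
  rw [List.append_assoc] at heq
  rcases List.append_eq_append_iff.mp heq with ⟨a', rfl, ha'⟩ | ⟨c', rfl, hc'⟩
  · rcases a' with _ | ⟨e, a'⟩
    · rw [List.nil_append] at ha'
      rcases List.cons_eq_append_iff.mp ha' with ⟨rfl, -⟩ | ⟨x₂, rfl, rfl⟩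
      · cases hxy
      · exact ⟨A, [], x₂, b, y, by simp, rfl, hxy, by simp⟩
    · obtain ⟨-, rfl⟩ := List.cons_eq_cons.mp ha'
      exact (hv.not_braidStep ⟨a', b, x, y, hxy, by simp, rfl⟩).elim
  · rcases List.append_eq_append_iff.mp hc' with ⟨s, rfl, -⟩ | ⟨s, rfl, hs⟩
    · exact (hA.not_braidStep ⟨a, s, x, y, hxy, by simp, rfl⟩).elim
    · rcases s with _ | ⟨e, x₂⟩
      · exact (hA.not_braidStep ⟨a, [], c', y, by simpa using hxy, by simp, rfl⟩).elim
      · obtain ⟨rfl, rfl⟩ := List.cons_eq_cons.mp hs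
        exact ⟨a, c', x₂, b, y, rfl, rfl, hxy, by simp⟩

theorem append_pair_eq_append_singleton {q u A₀ : List α} {a c : α}
    (h : q ++ a :: a :: u = A₀ ++ [c]) :
    (u = [] ∧ c = a) ∨ ∃ u₀, u = u₀ ++ [c] ∧ A₀ = q ++ a :: a :: u₀ := by
  rcases u.eq_nil_or_concat with rfl | ⟨u₀, e, rfl⟩
  · have : (q ++ [a]) ++ [a] = A₀ ++ [c] := by simpa using h
    exact Or.inl ⟨rfl, by simpa [eq_comm] using (List.append_inj' this rfl).2⟩
  · have : (q ++ a :: a :: u₀) ++ [e] = A₀ ++ [c] := by simpa using h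
    obtain ⟨rfl, he⟩ := List.append_inj' this rfl
    obtain rfl : e = c := by simpa using he
    exact Or.inr ⟨u₀, List.concat_eq_append .., rfl⟩

theorem mem_of_append_pair_eq_append_pair {q u A₀ : List α} {a c d : α}
    (h : q ++ a :: a :: u = A₀ ++ [c, d]) : c = a ∨ c ∈ u := by
  rcases u.eq_nil_or_concat with rfl | ⟨u₀, e, rfl⟩
  · left
    have : q ++ [a, a] = A₀ ++ [c, d] := by simpa using h
    exact (List.cons_eq_cons.mp (List.append_inj' this rfl).2).1.symm
  · have : (q ++ a :: a :: u₀) ++ [e] = (A₀ ++ [c]) ++ [d] := by simpa using h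
    rcases append_pair_eq_append_singleton (List.append_inj' this rfl).1 with
      ⟨-, rfl⟩ | ⟨u₁, rfl, -⟩
    · exact Or.inl rfl
    · simp

def insertions (p : List α) (J : α) (l : List α) : Set (List α) :=
  {l' | ∃ u v, l = u ++ v ∧ l' = p ++ (u ++ J :: v)}

/-- `J` can only commute past letters of `l`: it cannot enter `q ++ [a, a]`, since `a` is adjacent
to `J` and preceded by another `a`. -/
theorem braidStep_mem_insertions {q l w w' : List (Fin m)} {a J : Fin m}
    (haJ : (a : ℕ) + 1 = J) (hl : ∀ c ∈ l, (c : ℕ) + 2 ≤ J)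
    (hd : SlowlyDecreasing (q ++ a :: a :: l)) (hw : w ∈ insertions (q ++ [a, a]) J l)
    (h : BraidStep w w') : w' ∈ insertions (q ++ [a, a]) J l := by
  obtain ⟨u, v, rfl, rfl⟩ := hw
  have hdA : SlowlyDecreasing (q ++ a :: a :: u) := hd.infix ⟨[], v, by simp⟩
  have hdv : SlowlyDecreasing v := hd.infix ⟨q ++ a :: a :: u, [], by simp⟩
  obtain ⟨A₀, x₁, x₂, v₀, y, hA, rfl, hxy, rfl⟩ :=
    braidStep_append_cons hdA hdv (by simpa using h)
  have hx₂ : ∀ c ∈ x₂, (c : ℕ) + 2 ≤ J := fun c hc => hl c (by simp [hc])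
  generalize hx : x₁ ++ J :: x₂ = x at hxy
  cases hxy with
  | comm c d hcd =>
    rcases x₁ with _ | ⟨e, _ | ⟨e', x₁⟩⟩ <;> simp at hx
    · obtain ⟨rfl, rfl⟩ := hx
      rw [List.append_nil] at hA
      exact ⟨u ++ [d], v₀, by simp, by simp [← hA]⟩
    · obtain ⟨rfl, rfl, rfl⟩ := hx
      rcases append_pair_eq_append_singleton hA with ⟨-, rfl⟩ | ⟨u₀, rfl, rfl⟩
      · omega
      · exact ⟨u₀, e :: v₀, by simp, by simp⟩
  | braid c d hcd =>
    rcases x₁ with _ | ⟨e, _ | ⟨e', _ | ⟨e'', x₁⟩⟩⟩ <;> simp at hx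
    · have := hx₂ d (by simp [hx.2]); omega
    · have := hx₂ c (by simp [hx.2.2]); omega
    · obtain ⟨rfl, rfl, rfl, rfl⟩ := hx
      rcases mem_of_append_pair_eq_append_pair hA with rfl | hcu
      · omega
      · have := hl J (by simp [hcu]); omega

theorem not_lex_of_mem_insertions [LinearOrder α] {p l w : List α} {J : α}
    (hl : ∀ c ∈ l, c < J) (hw : w ∈ insertions p J l) : ¬ List.Lex (· < ·) w (p ++ l ++ [J]) := by
  obtain ⟨u, v, rfl, rfl⟩ := hw
  rw [show p ++ (u ++ v) ++ [J] = (p ++ u) ++ (v ++ [J]) by simp, ← List.append_assoc,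
    lex_append_left_iff]
  rcases v with _ | ⟨e, v⟩
  · exact irrefl _
  · have := hl e (by simp)
    intro h
    cases h with
    | cons => exact lt_irrefl _ this
    | rel h => exact lt_asymm this h

end Insertions

section Words

variable {n : ℕ}

theorem toList_sigma {i : ℕ} (h1 : 1 ≤ i) (h2 : i ≤ n - 1) :
    FreeMonoid.toList (sigma n i) = [(⟨i - 1, by omega⟩ : Fin (n - 1))] := by
  rw [sigma, dif_pos ⟨h1, h2⟩, FreeMonoid.toList_of]

theorem val_add_one_of_mem_toList_sigma {i : ℕ} {c : Fin (n - 1)}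
    (h : c ∈ FreeMonoid.toList (sigma n i)) : (c : ℕ) + 1 = i := by
  by_cases hi : 1 ≤ i ∧ i ≤ n - 1
  · rw [toList_sigma hi.1 hi.2, List.mem_singleton] at h
    subst h
    simp only
    omega
  · simp [sigma, dif_neg hi] at h

theorem sigma_val_add_one (c : Fin (n - 1)) : sigma n (c + 1) = FreeMonoid.of c := by
  rw [sigma, dif_pos ⟨by omega, by omega⟩]
  rfl

def braidStepCon (n : ℕ) : Con (Word n) where
  r u v := ReflTransGen BraidStep (FreeMonoid.toList u) (FreeMonoid.toList v)
  iseqv := ⟨fun _ => .refl, fun h => Std.Symm.symm _ _ h, .trans⟩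
  mul' h₁ h₂ := by
    simp only [FreeMonoid.toList_mul]
    exact reflTransGen_braidStep_append h₁ h₂

theorem braidCon_le_braidStepCon : braidCon n ≤ braidStepCon n := by
  refine Con.conGen_le.mpr fun x y h => ?_
  suffices hxy : BraidMove (FreeMonoid.toList x) (FreeMonoid.toList y) from
    .single ⟨[], [], _, _, hxy, by simp, by simp⟩
  cases h with
  | comm i j hi hi' hj hj' hij =>
    simp only [FreeMonoid.toList_mul, toList_sigma hi hi', toList_sigma hj hj',
      List.singleton_append]
    exact .comm _ _ (by simp only; omega)
  | braid i hi hi' =>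
    simp only [FreeMonoid.toList_mul, toList_sigma hi (by omega : i ≤ n - 1),
      toList_sigma (by omega : 1 ≤ i + 1) hi', List.cons_append]
    exact .braid _ _ (by simp only; omega)

theorem mem_Ln_of_braidStep_closed {w : Word n} (C : Set (List (Fin (n - 1))))
    (hC : ∀ l ∈ C, ∀ l', BraidStep l l' → l' ∈ C) (hw : FreeMonoid.toList w ∈ C)
    (hmin : ∀ l ∈ C, ¬ List.Lex (· < ·) l (FreeMonoid.toList w)) : w ∈ Ln n := fun _ hv =>
  hmin _ (mem_of_reflTransGen hC (braidCon_le_braidStepCon ((Con.eq _).mp hv.symm)) hw)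

theorem mem_Ln_of_slowlyDecreasing {w : Word n} (hw : SlowlyDecreasing (FreeMonoid.toList w)) :
    w ∈ Ln n :=
  mem_Ln_of_braidStep_closed {FreeMonoid.toList w}
    (fun _ hl _ h => ((hl ▸ hw).not_braidStep h).elim) rfl (fun _ hl => hl ▸ irrefl _)

theorem mem_Ln_of_commuting_last_letter {w : Word n} {q l : List (Fin (n - 1))} {a J : Fin (n - 1)}
    (hw : FreeMonoid.toList w = q ++ a :: a :: (l ++ [J]))
    (haJ : (a : ℕ) + 1 = J) (hl : ∀ c ∈ l, (c : ℕ) + 2 ≤ J)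
    (hd : SlowlyDecreasing (q ++ a :: a :: l)) : w ∈ Ln n := by
  have hw' : FreeMonoid.toList w = q ++ [a, a] ++ l ++ [J] := by simp [hw]
  refine mem_Ln_of_braidStep_closed (insertions (q ++ [a, a]) J l)
    (fun _ h _ => braidStep_mem_insertions haJ hl hd h) ⟨l, [], by simp, by simp [hw]⟩ ?_
  rw [hw']
  exact fun _ => not_lex_of_mem_insertions fun c hc => by have := hl c hc; omega

theorem pr_mul_sigma_comm {j : ℕ} (hj : j ≤ n - 1) (r : Word n)
    (hr : ∀ c ∈ FreeMonoid.toList r, (c : ℕ) + 3 ≤ j) :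
    pr n (r * sigma n j) = pr n (sigma n j * r) := by
  induction r using FreeMonoid.inductionOn' with
  | one => simp
  | of_mul c r ih =>
    simp only [FreeMonoid.toList_of_mul, List.mem_cons, forall_eq_or_imp] at hr
    have hc : pr n (FreeMonoid.of c * sigma n j) = pr n (sigma n j * FreeMonoid.of c) := by
      rw [← sigma_val_add_one]
      exact (Con.eq _).mpr (ConGen.Rel.of _ _ (.comm _ _ (by omega) (by omega) (by omega) hj
        (by omega)))
    simp only [map_mul] at hc ih ⊢
    rw [mul_assoc, ih hr.2, ← mul_assoc, hc, mul_assoc]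

theorem mul_sigma_not_mem_Ln {i : ℕ} (hi : 1 ≤ i) (hin : i + 1 ≤ n - 1) (P r : Word n)
    (hr : ∀ c ∈ FreeMonoid.toList r, (c : ℕ) + 3 ≤ i + 1) :
    P * sigma n (i + 1) * sigma n i * r * sigma n (i + 1) ∉ Ln n := by
  intro hw
  refine hw (P * sigma n i * sigma n (i + 1) * sigma n i * r) ?_ ?_
  · have hbraid : pr n (sigma n i * sigma n (i + 1) * sigma n i)
        = pr n (sigma n (i + 1) * sigma n i * sigma n (i + 1)) :=
      (Con.eq _).mpr (ConGen.Rel.of _ _ (.braid i hi hin))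
    have hcomm := pr_mul_sigma_comm hin r hr
    calc pr n (P * sigma n i * sigma n (i + 1) * sigma n i * r)
        = pr n P * pr n (sigma n i * sigma n (i + 1) * sigma n i) * pr n r := by
          simp only [map_mul, mul_assoc]
      _ = pr n P * pr n (sigma n (i + 1) * sigma n i) * pr n (sigma n (i + 1) * r) := by
          rw [hbraid]; simp only [map_mul, mul_assoc]
      _ = pr n (P * sigma n (i + 1) * sigma n i * r * sigma n (i + 1)) := by
          rw [← hcomm]; simp only [map_mul, mul_assoc]
  · simp only [lexLt, FreeMonoid.toList_mul, toList_sigma hi (by omega : i ≤ n - 1),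
      toList_sigma (by omega : 1 ≤ i + 1) hin, List.append_assoc, List.cons_append]
    exact List.Lex.append_left _ (.rel (by simp [Fin.lt_def]; omega)) _

end Words

section Witnesses

variable {n : ℕ}

def blocks (n : ℕ) (S : Finset ℕ) : ℕ → Word n
  | 0 | 1 => 1
  | k + 2 => sigma n (k + 2) * (if k + 2 ∈ S then sigma n (k + 1) else 1) * blocks n S (k + 1)

def wWord (n : ℕ) (S : Finset ℕ) : Word n := blocks n S (n - 1)

theorem blocks_eq_of_two_le {S : Finset ℕ} {k : ℕ} (hk : 2 ≤ k) :
    blocks n S k = sigma n k * (if k ∈ S then sigma n (k - 1) else 1) * blocks n S (k - 1) := by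
  obtain ⟨k, rfl⟩ := Nat.exists_eq_add_of_le' hk
  rfl

theorem exists_blocks_eq_mul_blocks {S : Finset ℕ} {j k : ℕ} (hj : 2 ≤ j) (hjk : j ≤ k) :
    ∃ P : Word n, blocks n S k = P * blocks n S j := by
  induction k, hjk using Nat.le_induction with
  | base => exact ⟨1, (one_mul _).symm⟩
  | succ k hjk ih =>
    obtain ⟨P, hP⟩ := ih
    rw [blocks_eq_of_two_le (by omega), Nat.add_sub_cancel, hP, ← mul_assoc]
    exact ⟨_, rfl⟩

theorem val_add_one_le_of_mem_blocks {S : Finset ℕ} :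
    ∀ {k : ℕ} {c : Fin (n - 1)}, c ∈ FreeMonoid.toList (blocks n S k) → (c : ℕ) + 1 ≤ k
  | 0, _, h | 1, _, h => by simp [blocks] at h
  | k + 2, c, h => by
    simp only [blocks, FreeMonoid.toList_mul, List.mem_append] at h
    rcases h with (h | h) | h
    · have := val_add_one_of_mem_toList_sigma h; omega
    · split_ifs at h
      · have := val_add_one_of_mem_toList_sigma h; omega
      · simp at h
    · have := val_add_one_le_of_mem_blocks h; omega

theorem slowlyDecreasing_cons_blocks {S : Finset ℕ} :
    ∀ {k : ℕ} (c : Fin (n - 1)), k ≤ n - 1 → k ≤ (c : ℕ) + 1 → (c : ℕ) ≤ k →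
      SlowlyDecreasing (c :: FreeMonoid.toList (blocks n S k))
  | 0, _, _, _, _ | 1, _, _, _, _ => by simp [blocks, SlowlyDecreasing]
  | k + 2, c, hk, hc₁, hc₂ => by
    simp only [blocks, FreeMonoid.toList_mul, toList_sigma (by omega : 1 ≤ k + 2) hk,
      List.singleton_append]
    refine List.isChain_cons_cons.mpr ⟨by simp only; omega, ?_⟩
    split_ifs
    · rw [toList_sigma (by omega) (by omega)]
      exact List.isChain_cons_cons.mpr
        ⟨by simp only; omega, slowlyDecreasing_cons_blocks _ (by omega) (by simp) (by simp)⟩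
    · exact slowlyDecreasing_cons_blocks _ (by omega) (by simp only; omega) (by simp only; omega)

theorem slowlyDecreasing_wWord (S : Finset ℕ) (hn : 2 ≤ n - 1) :
    SlowlyDecreasing (FreeMonoid.toList (wWord n S)) :=
  (slowlyDecreasing_cons_blocks ⟨n - 2, by omega⟩ le_rfl (by simp only; omega)
    (by simp only; omega)).tail

theorem wWord_mul_sigma_two_mem_Ln_iff (S : Finset ℕ) (hn : 2 ≤ n - 1) :
    wWord n S * sigma n 2 ∈ Ln n ↔ 2 ∉ S := by
  obtain ⟨P, hP⟩ := exists_blocks_eq_mul_blocks (n := n) (S := S) le_rfl hn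
  have hw : wWord n S = P * sigma n 2 * (if 2 ∈ S then sigma n 1 else 1) := by
    rw [wWord, hP, show blocks n S 2 = sigma n 2 * (if 2 ∈ S then sigma n 1 else 1) from mul_one _,
      mul_assoc]
  split_ifs at hw with h2 <;> simp only [h2, not_true_eq_false, not_false_eq_true, iff_false,
    iff_true]
  · simpa [hw] using mul_sigma_not_mem_Ln le_rfl hn P 1 (by simp)
  · refine mem_Ln_of_slowlyDecreasing (List.isChain_append.mpr
      ⟨slowlyDecreasing_wWord S hn, by simp [toList_sigma (by omega : 1 ≤ 2) hn], ?_⟩)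
    simp [hw, toList_sigma (by omega : 1 ≤ 2) hn]

theorem wWord_mul_sigma_mem_Ln_iff (S : Finset ℕ) {j : ℕ} (hj : 3 ≤ j) (hjn : j ≤ n - 1) :
    wWord n S * sigma n j ∈ Ln n ↔ j ∈ S := by
  obtain ⟨P, hP⟩ := exists_blocks_eq_mul_blocks (n := n) (S := S) (by omega) hjn
  set r : Word n := (if j - 1 ∈ S then sigma n (j - 2) else 1) * blocks n S (j - 2)
  have hw : wWord n S =
      P * sigma n j * (if j ∈ S then sigma n (j - 1) else 1) * (sigma n (j - 1) * r) := by
    rw [wWord, hP, blocks_eq_of_two_le (by omega), blocks_eq_of_two_le (k := j - 1) (by omega),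
      show j - 1 - 1 = j - 2 by omega]
    simp only [r, mul_assoc]
  have hr : ∀ c ∈ FreeMonoid.toList r, (c : ℕ) + 3 ≤ j := by
    intro c hc
    simp only [r, FreeMonoid.toList_mul, List.mem_append] at hc
    rcases hc with hc | hc
    · split_ifs at hc
      · have := val_add_one_of_mem_toList_sigma hc; omega
      · simp at hc
    · have := val_add_one_le_of_mem_blocks hc; omega
  split_ifs at hw with hjS <;> simp only [hjS, iff_true, iff_false]
  · have hj' : FreeMonoid.toList (sigma n (j - 1)) = [⟨j - 2, by omega⟩] := by
      rw [toList_sigma (by omega) (by omega)]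
      congr 2
    have hws := slowlyDecreasing_wWord (n := n) S (by omega)
    rw [hw] at hws
    refine mem_Ln_of_commuting_last_letter (q := FreeMonoid.toList P ++ [⟨j - 1, by omega⟩])
      (a := ⟨j - 2, by omega⟩) (J := ⟨j - 1, by omega⟩) (l := FreeMonoid.toList r)
      ?_ (by simp only; omega) (fun c hc => by have := hr c hc; simp only; omega) ?_
    · simp [hw, hj', toList_sigma (by omega : 1 ≤ j) hjn]
    · simpa [hj', toList_sigma (by omega : 1 ≤ j) hjn] using hws
  · obtain ⟨i, rfl⟩ : ∃ i, j = i + 1 := ⟨j - 1, by omega⟩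
    simpa [hw, mul_assoc] using mul_sigma_not_mem_Ln (by omega) hjn P r hr

end Witnesses

theorem natCard_le_of_injective_leftQuotient {α σ ι : Type*} [Finite σ] (M : DFA α σ)
    (f : ι → List α) (hf : Function.Injective (M.accepts.leftQuotient ∘ f)) :
    Nat.card ι ≤ Nat.card σ :=
  Nat.card_le_card_of_injective (M.eval ∘ f) fun a b h => hf (by
    simp only [Function.comp_apply, Language.leftQuotient_accepts_apply] at h ⊢
    rw [h])

theorem statement_16_general (n : ℕ) (Q : Type) (hQ : Finite Q)
    (M : DFA (Fin (n - 1)) Q)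
    (hM : ∀ u : List (Fin (n - 1)), u ∈ M.accepts ↔ FreeMonoid.ofList u ∈ Ln n) :
    2 ^ (n - 2) ≤ Nat.card Q := by
  set T := Finset.Icc 2 (n - 1)
  let f : T.powerset → List (Fin (n - 1)) := fun S => FreeMonoid.toList (wWord n S)
  have hquot (S : T.powerset) (j : ℕ) :
      FreeMonoid.toList (sigma n j) ∈ M.accepts.leftQuotient (f S) ↔
        wWord n S * sigma n j ∈ Ln n := by
    simp [f, hM]
  have hinj : Function.Injective (M.accepts.leftQuotient ∘ f) := by
    intro S S' h
    have hS := Finset.mem_powerset.mp S.2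
    have hS' := Finset.mem_powerset.mp S'.2
    refine Subtype.ext (Finset.ext fun j => ?_)
    by_cases hj : j ∈ T
    · have hmem := (hquot S j).symm.trans ((Set.ext_iff.mp h _).trans (hquot S' j))
      rw [Finset.mem_Icc] at hj
      rcases (show j = 2 ∨ 3 ≤ j by omega) with rfl | hj3
      · simpa [wWord_mul_sigma_two_mem_Ln_iff _ hj.2, not_iff_not] using hmem
      · simpa [wWord_mul_sigma_mem_Ln_iff _ hj3 hj.2] using hmem
    · exact iff_of_false (fun h => hj (hS h)) (fun h => hj (hS' h))
  calc 2 ^ (n - 2) = Nat.card T.powerset := by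
        rw [Nat.card_eq_fintype_card, Fintype.card_coe, Finset.card_powerset, Nat.card_Icc]
        congr 1
    _ ≤ Nat.card Q := natCard_le_of_injective_leftQuotient M f hinj

/-- every DFA accepting exactly `L_n` has at least `2^(n-2)` states. -/
theorem statement_16 (n : ℕ) (hn : 2 ≤ n) (Q : Type) (hQ : Finite Q)
    (M : DFA (Fin (n - 1)) Q)
    (hM : ∀ u : List (Fin (n - 1)), u ∈ M.accepts ↔ FreeMonoid.ofList u ∈ Ln n) :
    2 ^ (n - 2) ≤ Nat.card Q :=
  statement_16_general n Q hQ M hM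

end BraidPaper
end
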